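/- arXiv:2102.01794 — 5 statements merged into one kernel-verified Lean document; each statement's English description precedes it below -/
import Mathlib

section
/- Let x : ℕ → Bool, let u be an integer, and let g be a natural number. Then: (1) φ(x) < u / 2^g if and only if there exists a natural number k such that ∑_{i < g+k} x_i / 2^(i+1) < u / 2^g - 1 / 2^(g+k); and (2) φ(x) > u / 2^g if and only if there exists a natural number k such that ∑_{i < g+k} x_i / 2^(i+1) > u / 2^g. Here ∑_{i < N} denotes the finite sum over i ∈ {0, 1, ..., N-1}, and φ is the Cantor map. -/
/-!
The partial sums `s N` of the series defining `cantorMap x` increase to it, and the remaining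
tail is at most the geometric tail `1 / 2 ^ N`. Hence `cantorMap x > q` exactly when some
partial sum exceeds `q`, and `cantorMap x < q` exactly when some upper bound `s N + 1 / 2 ^ N`
falls below `q`; both sequences converge to `cantorMap x`, so such an `N` can be taken
arbitrarily large, in particular of the form `g + k`.
-/

/-- The Cantor map sending a binary sequence to a real number in `[0,1]`. -/
noncomputable def cantorMap (b : ℕ → Bool) : ℝ :=
  ∑' i : ℕ, (if b i then (1 : ℝ) else 0) / 2 ^ (i + 1)

open Filter Finset Topology

theorem Filter.Eventually.exists_add {p : ℕ → Prop} (h : ∀ᶠ N in atTop, p N) (g : ℕ) :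
    ∃ k, p (g + k) := by
  obtain ⟨N₀, hN₀⟩ := h.exists_forall_of_atTop
  exact ⟨N₀, hN₀ _ (Nat.le_add_left _ _)⟩

namespace CantorMap

noncomputable def term (b : ℕ → Bool) (i : ℕ) : ℝ :=
  (if b i then (1 : ℝ) else 0) / 2 ^ (i + 1)

variable (b : ℕ → Bool)

theorem cantorMap_eq_tsum_term : cantorMap b = ∑' i, term b i := rfl

theorem term_nonneg (i : ℕ) : 0 ≤ term b i := by
  unfold term; positivity

theorem term_le (i : ℕ) : term b i ≤ 1 / 2 / 2 ^ i := by
  have h : (1 : ℝ) / 2 / 2 ^ i = 1 / 2 ^ (i + 1) := by ring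
  rw [h, term]
  gcongr
  split_ifs <;> norm_num

theorem summable_term : Summable (term b) :=
  (summable_geometric_two' 1).of_nonneg_of_le (term_nonneg b) (term_le b)

theorem tsum_term_add_le_one_div_two_pow (N : ℕ) : ∑' i, term b (i + N) ≤ 1 / 2 ^ N := by
  have hshift (i : ℕ) : term b (i + N) ≤ 1 / 2 ^ N / 2 / 2 ^ i :=
    (term_le b (i + N)).trans_eq (by rw [pow_add]; ring)
  calc ∑' i, term b (i + N)
      ≤ ∑' i : ℕ, 1 / 2 ^ N / 2 / 2 ^ i :=
        ((summable_nat_add_iff N).2 (summable_term b)).tsum_le_tsum hshift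
          (summable_geometric_two' _)
    _ = 1 / 2 ^ N := tsum_geometric_two' _

theorem sum_range_term_le_cantorMap (N : ℕ) : ∑ i ∈ range N, term b i ≤ cantorMap b :=
  (summable_term b).sum_le_tsum _ fun i _ => term_nonneg b i

theorem cantorMap_le_sum_range_term_add (N : ℕ) :
    cantorMap b ≤ ∑ i ∈ range N, term b i + 1 / 2 ^ N := by
  rw [cantorMap_eq_tsum_term, ← (summable_term b).sum_add_tsum_nat_add N]
  gcongr
  exact tsum_term_add_le_one_div_two_pow b N

theorem tendsto_sum_range_term :
    Tendsto (fun N => ∑ i ∈ range N, term b i) atTop (𝓝 (cantorMap b)) :=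
  (summable_term b).hasSum.tendsto_sum_nat

theorem tendsto_sum_range_term_add :
    Tendsto (fun N => ∑ i ∈ range N, term b i + 1 / 2 ^ N) atTop (𝓝 (cantorMap b)) := by
  simpa using (tendsto_sum_range_term b).add
    (tendsto_pow_atTop_nhds_zero_of_lt_one (by norm_num : (0 : ℝ) ≤ 1 / 2) (by norm_num))

theorem cantorMap_lt_iff (q : ℝ) (g : ℕ) :
    cantorMap b < q ↔ ∃ k, ∑ i ∈ range (g + k), term b i < q - 1 / 2 ^ (g + k) := by
  constructor
  · intro h
    obtain ⟨k, hk⟩ := ((tendsto_sum_range_term_add b).eventually_lt_const h).exists_add g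
    exact ⟨k, by linarith⟩
  · rintro ⟨k, hk⟩
    linarith [cantorMap_le_sum_range_term_add b (g + k)]

theorem lt_cantorMap_iff (q : ℝ) (g : ℕ) :
    q < cantorMap b ↔ ∃ k, q < ∑ i ∈ range (g + k), term b i :=
  ⟨fun h => ((tendsto_sum_range_term b).eventually_const_lt h).exists_add g,
    fun ⟨k, hk⟩ => hk.trans_le (sum_range_term_le_cantorMap b (g + k))⟩

end CantorMap

theorem cantorMap_lt_gt_dyadic_iff (x : ℕ → Bool) (u : ℤ) (g : ℕ) :
    (cantorMap x < (u : ℝ) / 2 ^ g ↔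
      ∃ k : ℕ, ∑ i ∈ Finset.range (g + k), (if x i then (1 : ℝ) else 0) / 2 ^ (i + 1)
        < (u : ℝ) / 2 ^ g - 1 / 2 ^ (g + k)) ∧
    (cantorMap x > (u : ℝ) / 2 ^ g ↔
      ∃ k : ℕ, ∑ i ∈ Finset.range (g + k), (if x i then (1 : ℝ) else 0) / 2 ^ (i + 1)
        > (u : ℝ) / 2 ^ g) :=
  ⟨CantorMap.cantorMap_lt_iff x _ g, CantorMap.lt_cantorMap_iff x _ g⟩
end

section
/- There exists a continuous surjection from ℤ₂ onto the Hilbert cube ℕ → [0,1]. (This is the topological form of the statement that there is an injective frame homomorphism from the Hilbert cube frame into the frame of ℤ₂.) -/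
/-!
The `k`-th `p`-adic digit of `z ∈ ℤ_[p]` only depends on `z mod p ^ (k + 1)`, so the digit map
`ℤ_[p] → (ℕ → Fin p)` is continuous; it is surjective because every digit sequence `c` is
realised by the convergent series `∑ c k * p ^ k`. For `p = 2` this is a continuous surjection
onto Cantor space, and Mathlib's `cantorToHilbert` maps Cantor space continuously onto the
Hilbert cube.
-/

open Finset

theorem Nat.sum_range_mul_pow_lt {p : ℕ} {c : ℕ → ℕ} (hc : ∀ i, c i < p) (n : ℕ) :
    ∑ i ∈ range n, c i * p ^ i < p ^ n := by
  induction n with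
  | zero => simp
  | succ n ih =>
    rw [sum_range_succ, pow_succ']
    nlinarith [Nat.mul_le_mul_right (p ^ n) (hc n)]

namespace PadicInt

variable {p : ℕ} [hp : Fact p.Prime]

theorem continuous_toZModPow (n : ℕ) : Continuous (toZModPow n : ℤ_[p] → ZMod (p ^ n)) := by
  have hker : (RingHom.ker (toZModPow n : ℤ_[p] →+* ZMod (p ^ n)) : Set ℤ_[p]) =
      Metric.closedBall 0 ((p : ℝ) ^ (-n : ℤ)) := by
    ext x
    simp [ker_toZModPow, ← norm_le_pow_iff_mem_span_pow]
  refine continuous_of_continuousAt_zero (toZModPow n) ?_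
  rw [ContinuousAt, map_zero, nhds_discrete (ZMod _), Filter.tendsto_pure]
  exact (hker ▸ IsUltrametricDist.isOpen_closedBall _
    (zpow_pos (Nat.cast_pos.2 hp.out.pos) _).ne').mem_nhds (map_zero _)

noncomputable def digits (z : ℤ_[p]) (k : ℕ) : Fin p :=
  Fin.ofNat p ((toZModPow (k + 1) z).val / p ^ k)

theorem continuous_digits : Continuous (digits : ℤ_[p] → ℕ → Fin p) :=
  continuous_pi fun k =>
    (continuous_of_discreteTopology
      (f := fun x : ZMod (p ^ (k + 1)) => Fin.ofNat p (x.val / p ^ k))).comp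
      (continuous_toZModPow (k + 1))

noncomputable def ofDigits (c : ℕ → Fin p) : ℤ_[p] :=
  ∑' i, ((c i : ℕ) : ℤ_[p]) * p ^ i

theorem summable_ofDigits (c : ℕ → Fin p) :
    Summable fun i => ((c i : ℕ) : ℤ_[p]) * p ^ i := by
  refine .of_norm_bounded (g := fun i => ((p : ℝ)⁻¹) ^ i)
    (summable_geometric_of_lt_one (by positivity)
      (inv_lt_one_of_one_lt₀ (mod_cast hp.out.one_lt))) fun i => ?_
  rw [norm_mul, norm_pow, norm_p]
  exact mul_le_of_le_one_left (by positivity) (norm_le_one _)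

theorem toZModPow_ofDigits (c : ℕ → Fin p) (n : ℕ) :
    toZModPow n (ofDigits c) = ((∑ i ∈ range n, (c i : ℕ) * p ^ i : ℕ) : ZMod (p ^ n)) := by
  rw [ofDigits, (summable_ofDigits c).map_tsum _ (continuous_toZModPow n),
    tsum_eq_sum (s := range n)]
  · push_cast
    simp
  · intro i hi
    have : (p : ZMod (p ^ n)) ^ i = 0 := mod_cast
      (ZMod.natCast_eq_zero_iff _ _).2 (pow_dvd_pow p (by simpa using hi))
    simp [this]

theorem digits_ofDigits (c : ℕ → Fin p) : digits (ofDigits c) = c := by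
  funext k
  ext
  rw [digits, Fin.val_ofNat, toZModPow_ofDigits, ZMod.val_natCast_of_lt
    (Nat.sum_range_mul_pow_lt (fun i => (c i).isLt) (k + 1)), sum_range_succ,
    Nat.add_mul_div_right _ _ (pow_pos hp.out.pos k),
    Nat.div_eq_of_lt (Nat.sum_range_mul_pow_lt (fun i => (c i).isLt) k), zero_add,
    Nat.mod_eq_of_lt (c k).isLt]

theorem digits_surjective : Function.Surjective (digits : ℤ_[p] → ℕ → Fin p) :=
  Function.LeftInverse.surjective digits_ofDigits

end PadicInt

theorem exists_continuous_surjection_padicInt_two_to_hilbertCube :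
    ∃ f : ℤ_[2] → (ℕ → Set.Icc (0 : ℝ) 1),
      Continuous f ∧ Function.Surjective f := by
  let toCantor : (ℕ → Fin 2) ≃ₜ (ℕ → Bool) :=
    Homeomorph.piCongrRight fun _ => finTwoEquiv.toHomeomorphOfDiscrete
  exact ⟨cantorToHilbert ∘ toCantor ∘ PadicInt.digits,
    cantorToHilbert_continuous.comp (toCantor.continuous.comp PadicInt.continuous_digits),
    cantorToHilbert_surjective.comp (toCantor.surjective.comp PadicInt.digits_surjective)⟩
end

section
/- A topological space X is regular Hausdorff (T3) and second-countable if and only if there exists a topological embedding of X into the Hilbert cube ℕ → [0,1]. (This is the topological form of the statement that a frame is regular with a countable basis if and only if it is a quotient of the Hilbert cube frame.) -/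
theorem t3_secondCountable_iff_embedding_hilbertCube
    (X : Type*) [TopologicalSpace X] :
    (T3Space X ∧ SecondCountableTopology X) ↔
      ∃ f : X → (ℕ → Set.Icc (0 : ℝ) 1), Topology.IsEmbedding f := by
  constructor
  · rintro ⟨_, _⟩
    -- Urysohn metrization makes `X` a separable metric space, which embeds into the Hilbert cube
    -- through its truncated distances to a dense sequence.
    let := TopologicalSpace.metrizableSpaceMetric X
    exact Metric.PiNatEmbed.exists_embedding_to_hilbert_cube
  · rintro ⟨f, hf⟩
    exact ⟨hf.t3Space, hf.secondCountableTopology⟩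
end

section
/- Every nonempty closed subset C of ℤ₂ is a retract of ℤ₂: there exists a continuous map r : ℤ₂ → ℤ₂ such that the range of r is C and r(x) = x for every x ∈ C. (This is the topological form of the statement that every non-trivial closed quotient of the frame of ℤ₂ is a retract of the frame of ℤ₂.) -/
/-!
In an ultrametric space, if `dist x y < infDist x C` then `y` has the same distance as `x` to
every point of `C`, hence the same set of nearest points in `C`. So choosing a nearest point by a
choice function applied to that set gives a map which is constant on the ball of radius
`infDist x C` around each `x ∉ C` and fixes `C` pointwise. Nearest points exist because `ℤ₂` is
compact.
-/

open Metric

variable {X : Type*}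

lemma IsUltrametricDist.dist_eq_of_dist_lt [PseudoMetricSpace X] [IsUltrametricDist X]
    {x y z : X} (h : dist x y < dist x z) : dist y z = dist x z := by
  rw [dist_eq_max_of_dist_ne_dist y x z (by rw [dist_comm]; exact h.ne), dist_comm y x,
    max_eq_right h.le]

lemma Metric.infDist_eq_of_dist_lt_infDist [PseudoMetricSpace X] [IsUltrametricDist X]
    {s : Set X} {x y : X} (h : dist x y < infDist x s) : infDist y s = infDist x s := by
  simp only [infDist, infEDist]
  congr 1
  refine iInf_congr fun c => iInf_congr fun hc => ?_
  rw [edist_dist, edist_dist,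
    IsUltrametricDist.dist_eq_of_dist_lt (h.trans_le (infDist_le_dist_of_mem hc))]

namespace Metric

section PseudoMetric

variable [PseudoMetricSpace X]

noncomputable def nearestPointRetraction (s : Set X) (x : X) : X :=
  @Classical.epsilon X ⟨x⟩ fun y => y ∈ s ∧ dist x y = infDist x s

variable {s : Set X}

lemma nearestPointRetraction_spec [ProperSpace X] (hs : IsClosed s) (hne : s.Nonempty) (x : X) :
    nearestPointRetraction s x ∈ s ∧ dist x (nearestPointRetraction s x) = infDist x s :=
  have ⟨y, hy, hxy⟩ := hs.exists_infDist_eq_dist hne x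
  Classical.epsilon_spec (p := fun y => y ∈ s ∧ dist x y = infDist x s) ⟨y, hy, hxy.symm⟩

lemma nearestPointRetraction_eq_of_dist_lt_infDist [IsUltrametricDist X] {x y : X}
    (h : dist x y < infDist x s) : nearestPointRetraction s y = nearestPointRetraction s x := by
  have hdist : ∀ c ∈ s, dist y c = dist x c := fun c hc =>
    IsUltrametricDist.dist_eq_of_dist_lt (h.trans_le (infDist_le_dist_of_mem hc))
  unfold nearestPointRetraction
  congr 1
  funext c
  exact propext <| and_congr_right fun hc => by
    rw [hdist c hc, infDist_eq_of_dist_lt_infDist h]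

end PseudoMetric

variable [MetricSpace X] [ProperSpace X] {s : Set X}

lemma nearestPointRetraction_of_mem (hs : IsClosed s) {x : X} (hx : x ∈ s) :
    nearestPointRetraction s x = x := by
  have hdist := (nearestPointRetraction_spec hs ⟨x, hx⟩ x).2
  rw [infDist_zero_of_mem hx, dist_eq_zero] at hdist
  exact hdist.symm

lemma range_nearestPointRetraction (hs : IsClosed s) (hne : s.Nonempty) :
    Set.range (nearestPointRetraction s) = s :=
  subset_antisymm (Set.range_subset_iff.2 fun x => (nearestPointRetraction_spec hs hne x).1)
    fun x hx => ⟨x, nearestPointRetraction_of_mem hs hx⟩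

lemma continuous_nearestPointRetraction [IsUltrametricDist X] (hs : IsClosed s)
    (hne : s.Nonempty) : Continuous (nearestPointRetraction s) := by
  refine continuous_iff_continuousAt.2 fun x => ?_
  by_cases hx : x ∈ s
  · refine continuousAt_iff.2 fun ε hε => ⟨ε, hε, fun y hy => ?_⟩
    have hnear : dist (nearestPointRetraction s y) y ≤ dist y x := by
      rw [dist_comm, (nearestPointRetraction_spec hs hne y).2]
      exact infDist_le_dist_of_mem hx
    rw [nearestPointRetraction_of_mem hs hx]
    exact (dist_triangle_max _ y x).trans_lt (max_lt (hnear.trans_lt hy) hy)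
  · have hpos : 0 < infDist x s := (hs.notMem_iff_infDist_pos hne).1 hx
    exact continuousAt_const.congr <| Filter.eventually_of_mem (ball_mem_nhds x hpos)
      fun y hy => (nearestPointRetraction_eq_of_dist_lt_infDist (mem_ball'.1 hy)).symm

end Metric

theorem closed_subset_retract_of_padicInt_two
    (C : Set ℤ_[2]) (hC : C.Nonempty) (hclosed : IsClosed C) :
    ∃ r : ℤ_[2] → ℤ_[2], Continuous r ∧ Set.range r = C ∧ ∀ x ∈ C, r x = x :=
  ⟨nearestPointRetraction C, continuous_nearestPointRetraction hclosed hC,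
    range_nearestPointRetraction hclosed hC, fun _ => nearestPointRetraction_of_mem hclosed⟩
end

section
/- Hausdorff–Alexandroff theorem: for every nonempty compact metric space X there exists a continuous surjection f : ℤ₂ → X. (This is the topological form of the paper's main theorem that for every compact metrizable frame L there is an injective frame homomorphism from L into the frame of ℤ₂.) -/
/-!
Reading off the binary digits of a 2-adic integer is continuous, since the first `n` digits of
`z` only depend on `z mod 2^n`. It is onto the Cantor space `ℕ → Bool`: its image is compact,
hence closed, and it is dense because the natural numbers already realise every finite digit
pattern. Composing with a continuous surjection of the Cantor space onto `X` proves the theorem.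
-/

open Filter

theorem Nat.testBit_sum_two_pow (s : Finset ℕ) (i : ℕ) :
    (∑ j ∈ s, 2 ^ j).testBit i = decide (i ∈ s) := by
  rw [Bool.eq_iff_iff, ← Nat.mem_bitIndices, ← List.mem_toFinset,
    Finset.toFinset_bitIndices_sum_two_pow, decide_eq_true_iff]

theorem Nat.denseRange_testBit : DenseRange (Nat.testBit : ℕ → ℕ → Bool) := by
  intro b
  let truncation (N : ℕ) : ℕ := ∑ j ∈ (Finset.range N).filter (b ·), 2 ^ j
  refine mem_closure_of_tendsto (f := fun N => (truncation N).testBit) (b := atTop) ?_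
    (.of_forall fun N => Set.mem_range_self _)
  refine tendsto_pi_nhds.2 fun i => tendsto_const_nhds.congr' ?_
  filter_upwards [eventually_gt_atTop i] with N hN
  simp [truncation, Nat.testBit_sum_two_pow, hN]

namespace PadicInt

theorem isLocallyConstant_toZModPow {p : ℕ} [Fact p.Prime] (n : ℕ) :
    IsLocallyConstant (toZModPow (p := p) n) := by
  have hradius : (0 : ℝ) < (p : ℝ) ^ (-n : ℤ) :=
    zpow_pos (Nat.cast_pos.2 (Fact.out : p.Prime).pos) _
  refine (IsLocallyConstant.iff_eventually_eq _).2 fun x => ?_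
  filter_upwards [Metric.closedBall_mem_nhds x hradius] with y hy
  rw [← sub_eq_zero, ← map_sub, ← RingHom.mem_ker, ker_toZModPow,
    ← norm_le_pow_iff_mem_span_pow, ← dist_eq_norm]
  exact hy

noncomputable def binaryDigits (z : ℤ_[2]) (n : ℕ) : Bool :=
  (toZModPow (n + 1) z).val.testBit n

theorem continuous_binaryDigits : Continuous binaryDigits :=
  continuous_pi fun n =>
    ((isLocallyConstant_toZModPow (n + 1)).comp fun a => a.val.testBit n).continuous

theorem binaryDigits_natCast (m : ℕ) : binaryDigits m = m.testBit := by
  ext n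
  simp [binaryDigits, ZMod.val_natCast, Nat.testBit_mod_two_pow]

theorem binaryDigits_surjective : Function.Surjective binaryDigits := by
  have hclosed : IsClosed (Set.range binaryDigits) :=
    (isCompact_range continuous_binaryDigits).isClosed
  have hdense : Dense (Set.range binaryDigits) :=
    Nat.denseRange_testBit.mono (by rintro _ ⟨m, rfl⟩; exact ⟨m, binaryDigits_natCast m⟩)
  exact Set.range_eq_univ.1 (hclosed.closure_eq ▸ hdense.closure_eq)

end PadicInt

theorem hausdorff_alexandroff
    (X : Type*) [MetricSpace X] [CompactSpace X] [Nonempty X] :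
    ∃ f : ℤ_[2] → X, Continuous f ∧ Function.Surjective f := by
  obtain ⟨f, hf_cont, hf_surj⟩ := exists_nat_bool_continuous_surjective_of_compact X
  exact ⟨f ∘ PadicInt.binaryDigits, hf_cont.comp PadicInt.continuous_binaryDigits,
    hf_surj.comp PadicInt.binaryDigits_surjective⟩
end
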